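/- arXiv:1411.2272 — 6 statements merged into one kernel-verified Lean document; each statement's English description precedes it below -/
import Mathlib

section
/- If p(x) = ∑_{j=0}^n c_j x^j and q(x) = ∑_{j=0}^m e_j x^j are polynomials with nonnegative real coefficients, c_0 > 0, e_0 > 0, and their product p·q = ∑_{s=0}^{n+m} x^s (all coefficients equal to 1), then for each s ≥ 1 it is not the case that both c_s > 0 and e_s > 0. -/
open Polynomial Finset

theorem uniqueness_of_terms_two_dice (p q : ℝ[X])
    (hp : ∀ k, 0 ≤ p.coeff k) (hq : ∀ k, 0 ≤ q.coeff k)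
    (hp0 : 0 < p.coeff 0) (hq0 : 0 < q.coeff 0)
    (hprod : p * q = ∑ s ∈ Finset.range (p.natDegree + q.natDegree + 1), (X : ℝ[X]) ^ s) :
    ∀ s, 1 ≤ s → ¬(0 < p.coeff s ∧ 0 < q.coeff s) := by
  intro s hs1 hboth
  obtain ⟨hcs, hes⟩ := hboth
  set n := p.natDegree with hn
  set m := q.natDegree with hm
  have hsn : s ≤ n := p.le_natDegree_of_ne_zero (ne_of_gt hcs)
  have hsm : s ≤ m := q.le_natDegree_of_ne_zero (ne_of_gt hes)
  have hczero : ∀ i, n < i → p.coeff i = 0 := fun i hi =>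
    p.coeff_eq_zero_of_natDegree_lt hi
  have hezero : ∀ j, m < j → q.coeff j = 0 := fun j hj =>
    q.coeff_eq_zero_of_natDegree_lt hj
  -- coefficients of the product as convolution sums
  have hsum : ∀ t, t ≤ n + m →
      ∑ i ∈ range (t + 1), p.coeff i * q.coeff (t - i) = 1 := by
    intro t ht
    have h1 : (p * q).coeff t = 1 := by
      rw [hprod, finset_sum_coeff]
      simp only [coeff_X_pow]
      rw [Finset.sum_ite_eq (range (n + m + 1)) t (fun _ => (1 : ℝ))]
      simp [Nat.lt_succ_iff, ht]
    rw [coeff_mul, Finset.Nat.sum_antidiagonal_eq_sum_range_succ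
      (fun i j => p.coeff i * q.coeff j)] at h1
    exact h1
  have h00 : p.coeff 0 * q.coeff 0 = 1 := by
    have := hsum 0 (Nat.zero_le _)
    simpa using this
  -- any single product of coefficients is at most 1
  have hterm_le : ∀ i j, p.coeff i * q.coeff j ≤ 1 := by
    intro i j
    by_cases hij : i ≤ n ∧ j ≤ m
    · have hle : i + j ≤ n + m := Nat.add_le_add hij.1 hij.2
      have h1 := hsum (i + j) hle
      have hmem : i ∈ range (i + j + 1) := by
        simp [Nat.lt_succ_iff]
      have hsingle : p.coeff i * q.coeff (i + j - i) ≤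
          ∑ i' ∈ range (i + j + 1), p.coeff i' * q.coeff (i + j - i') :=
        Finset.single_le_sum (fun i' _ => mul_nonneg (hp i') (hq _)) hmem
      rw [Nat.add_sub_cancel_left] at hsingle
      linarith
    · push_neg at hij
      rcases le_or_gt i n with hi | hi
      · have := hezero j (hij hi)
        rw [this, mul_zero]; norm_num
      · rw [hczero i hi, zero_mul]; norm_num
  -- constant coefficients are the maximal coefficients
  have hmaxc : ∀ i, p.coeff i ≤ p.coeff 0 := by
    intro i
    have h1 : p.coeff i * q.coeff 0 ≤ p.coeff 0 * q.coeff 0 := by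
      rw [h00]; exact hterm_le i 0
    exact le_of_mul_le_mul_right h1 hq0
  have hmaxe : ∀ j, q.coeff j ≤ q.coeff 0 := by
    intro j
    have h1 : p.coeff 0 * q.coeff j ≤ p.coeff 0 * q.coeff 0 := by
      rw [h00]; exact hterm_le 0 j
    exact le_of_mul_le_mul_left h1 hp0
  -- top coefficient: c_n * e_m = 1
  have htop : p.coeff n * q.coeff m = 1 := by
    have h1 := hsum (n + m) le_rfl
    have h2 : ∑ i ∈ range (n + m + 1), p.coeff i * q.coeff (n + m - i) =
        p.coeff n * q.coeff (n + m - n) := by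
      apply Finset.sum_eq_single_of_mem n (by simp [Nat.lt_succ_iff])
      intro i _ hine
      rcases lt_or_gt_of_ne hine with hlt | hgt
      · rw [hezero (n + m - i) (by omega), mul_zero]
      · rw [hczero i hgt, zero_mul]
    rw [h2] at h1
    rwa [Nat.add_sub_cancel_left] at h1
  have hcn : p.coeff n = p.coeff 0 := by
    have h1 : p.coeff n * q.coeff 0 ≤ 1 := hterm_le n 0
    have h2 : 1 ≤ p.coeff n * q.coeff 0 := by
      calc 1 = p.coeff n * q.coeff m := htop.symm
        _ ≤ p.coeff n * q.coeff 0 := by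
            apply mul_le_mul_of_nonneg_left (hmaxe m) (hp n)
    have h3 : p.coeff n * q.coeff 0 = p.coeff 0 * q.coeff 0 := by
      rw [h00]; linarith
    exact mul_right_cancel₀ (ne_of_gt hq0) h3
  have hem : q.coeff m = q.coeff 0 := by
    have h1 : p.coeff 0 * q.coeff m ≤ 1 := hterm_le 0 m
    have h2 : 1 ≤ p.coeff 0 * q.coeff m := by
      calc 1 = p.coeff n * q.coeff m := htop.symm
        _ ≤ p.coeff 0 * q.coeff m := by
            apply mul_le_mul_of_nonneg_right (hmaxc n) (hq m)
    have h3 : p.coeff 0 * q.coeff m = p.coeff 0 * q.coeff 0 := by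
      rw [h00]; linarith
    exact mul_left_cancel₀ (ne_of_gt hp0) h3
  -- antidiagonal n: all terms other than c_n * e_0 vanish
  have hzero_n : ∀ i, i < n → p.coeff i * q.coeff (n - i) = 0 := by
    intro i hi
    have h1 := hsum n (Nat.le_add_right n m)
    have hnmem : n ∈ range (n + 1) := self_mem_range_succ n
    rw [← Finset.sum_erase_add _ _ hnmem] at h1
    have hfn : p.coeff n * q.coeff (n - n) = 1 := by
      rw [Nat.sub_self, hcn, h00]
    rw [hfn] at h1
    have h2 : ∑ i' ∈ (range (n + 1)).erase n, p.coeff i' * q.coeff (n - i') = 0 := by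
      linarith
    have h3 := (Finset.sum_eq_zero_iff_of_nonneg
      (fun i' _ => mul_nonneg (hp i') (hq _))).mp h2
    exact h3 i (by simp [Finset.mem_erase, Nat.lt_succ_iff]; omega)
  -- antidiagonal m: all terms other than c_0 * e_m vanish
  have hzero_m : ∀ i, 1 ≤ i → i ≤ m → p.coeff i * q.coeff (m - i) = 0 := by
    intro i hi1 him
    have h1 := hsum m (Nat.le_add_left m n)
    have h0mem : 0 ∈ range (m + 1) := by simp
    rw [← Finset.sum_erase_add _ _ h0mem] at h1
    have hf0 : p.coeff 0 * q.coeff (m - 0) = 1 := by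
      rw [Nat.sub_zero, hem, h00]
    rw [hf0] at h1
    have h2 : ∑ i' ∈ (range (m + 1)).erase 0, p.coeff i' * q.coeff (m - i') = 0 := by
      linarith
    have h3 := (Finset.sum_eq_zero_iff_of_nonneg
      (fun i' _ => mul_nonneg (hp i') (hq _))).mp h2
    exact h3 i (by simp [Finset.mem_erase, Nat.lt_succ_iff]; omega)
  -- reversed convolution sums
  have hrev : ∀ k, k ≤ s →
      ∑ a ∈ range (k + 1), p.coeff (n - a) * q.coeff (m - (k - a)) = 1 := by
    intro k hks
    have hkn : k ≤ n := le_trans hks hsn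
    have hkm : k ≤ m := le_trans hks hsm
    have h1 := hsum (n + m - k) (by omega)
    set T := (range (k + 1)).image (fun a => n - a) with hT
    have hTsub : T ⊆ range (n + m - k + 1) := by
      intro x hx
      rw [hT, Finset.mem_image] at hx
      obtain ⟨a, ha, rfl⟩ := hx
      rw [Finset.mem_range] at ha ⊢
      omega
    have hTzero : ∀ x ∈ range (n + m - k + 1), x ∉ T →
        p.coeff x * q.coeff (n + m - k - x) = 0 := by
      intro x hx hxT
      by_cases hxn : n - k ≤ x ∧ x ≤ n
      · exfalso
        apply hxT
        rw [hT, Finset.mem_image]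
        exact ⟨n - x, by rw [Finset.mem_range]; omega, by omega⟩
      · push_neg at hxn
        rcases le_or_gt x n with hxle | hxgt
        · have hlt : x < n - k := by
            rcases lt_or_ge x (n - k) with h | h
            · exact h
            · exact absurd hxle (hxn h).not_ge
          rw [hezero (n + m - k - x) (by omega), mul_zero]
        · rw [hczero x hxgt, zero_mul]
    rw [← Finset.sum_subset hTsub hTzero] at h1
    rw [hT, Finset.sum_image (by
      intro a ha b hb hab
      rw [Finset.mem_coe, Finset.mem_range] at ha hb
      simp only at hab
      omega)] at h1
    rw [← h1]
    apply Finset.sum_congr rfl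
    intro a ha
    rw [Finset.mem_range] at ha
    congr 1
    congr 1
    omega
  -- decomposed convolution identities
  have hA : ∀ k, 1 ≤ k → k ≤ s →
      p.coeff 0 * q.coeff k +
        (∑ i ∈ Finset.Ico 1 k, p.coeff i * q.coeff (k - i)) +
        p.coeff k * q.coeff 0 = 1 := by
    intro k hk1 hks
    have h1 := hsum k (by omega)
    rw [Finset.range_eq_Ico, Finset.sum_eq_sum_Ico_succ_bot (by omega : 0 < k + 1),
      Finset.sum_Ico_succ_top (by omega : 1 ≤ k)] at h1
    rw [Nat.sub_zero, Nat.sub_self] at h1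
    linarith
  have hB : ∀ k, 1 ≤ k → k ≤ s →
      p.coeff 0 * q.coeff (m - k) +
        (∑ i ∈ Finset.Ico 1 k, p.coeff (n - i) * q.coeff (m - (k - i))) +
        p.coeff (n - k) * q.coeff 0 = 1 := by
    intro k hk1 hks
    have h1 := hrev k hks
    rw [Finset.range_eq_Ico, Finset.sum_eq_sum_Ico_succ_bot (by omega : 0 < k + 1),
      Finset.sum_Ico_succ_top (by omega : 1 ≤ k)] at h1
    simp only [Nat.sub_zero, Nat.sub_self] at h1
    rw [hcn, hem] at h1
    linarith
  -- the key structural induction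
  have key : ∀ k, 1 ≤ k → k ≤ s →
      (p.coeff k = 0 ∧ q.coeff k = 0 ∧ p.coeff (n - k) = 0 ∧ q.coeff (m - k) = 0) ∨
      (p.coeff k = 0 ∧ q.coeff k = q.coeff 0 ∧ p.coeff (n - k) = 0 ∧
        q.coeff (m - k) = q.coeff 0) ∨
      (p.coeff k = p.coeff 0 ∧ q.coeff k = 0 ∧ p.coeff (n - k) = p.coeff 0 ∧
        q.coeff (m - k) = 0) := by
    intro k
    induction k using Nat.strong_induction_on with
    | _ k IH =>
      intro hk1 hks
      have hkn : k ≤ n := le_trans hks hsn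
      have hkm : k ≤ m := le_trans hks hsm
      -- the two middle sums coincide
      have hceq : ∀ i, 1 ≤ i → i < k → p.coeff (n - i) = p.coeff i := by
        intro i hi1 hik
        rcases IH i hik hi1 (by omega) with ⟨h1, _, h2, _⟩ | ⟨h1, _, h2, _⟩ | ⟨h1, _, h2, _⟩ <;>
          rw [h1, h2]
      have heeq : ∀ i, 1 ≤ i → i < k → q.coeff (m - i) = q.coeff i := by
        intro i hi1 hik
        rcases IH i hik hi1 (by omega) with ⟨_, h1, _, h2⟩ | ⟨_, h1, _, h2⟩ | ⟨_, h1, _, h2⟩ <;>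
          rw [h1, h2]
      have hMeq : ∑ i ∈ Finset.Ico 1 k, p.coeff (n - i) * q.coeff (m - (k - i)) =
          ∑ i ∈ Finset.Ico 1 k, p.coeff i * q.coeff (k - i) := by
        apply Finset.sum_congr rfl
        intro i hi
        rw [Finset.mem_Ico] at hi
        rw [hceq i hi.1 hi.2, heeq (k - i) (by omega) (by omega)]
      have hAk := hA k hk1 hks
      have hBk := hB k hk1 hks
      rw [hMeq] at hBk
      set M := ∑ i ∈ Finset.Ico 1 k, p.coeff i * q.coeff (k - i) with hMdef
      have hMnn : 0 ≤ M := Finset.sum_nonneg (fun i _ => mul_nonneg (hp i) (hq _))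
      -- each middle term is 0 or 1
      have hM01 : M = 0 ∨ 1 ≤ M := by
        have hterm : ∀ i ∈ Finset.Ico 1 k,
            p.coeff i * q.coeff (k - i) = 0 ∨ p.coeff i * q.coeff (k - i) = 1 := by
          intro i hi
          rw [Finset.mem_Ico] at hi
          rcases IH i hi.2 hi.1 (by omega) with ⟨h1, _, _, _⟩ | ⟨h1, _, _, _⟩ | ⟨h1, _, _, _⟩
          · left; rw [h1, zero_mul]
          · left; rw [h1, zero_mul]
          · rcases IH (k - i) (by omega) (by omega) (by omega) with
              ⟨_, h2, _, _⟩ | ⟨_, h2, _, _⟩ | ⟨_, h2, _, _⟩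
            · left; rw [h2, mul_zero]
            · right; rw [h1, h2, h00]
            · left; rw [h2, mul_zero]
        by_cases hex : ∃ i ∈ Finset.Ico 1 k, p.coeff i * q.coeff (k - i) = 1
        · right
          obtain ⟨i, hi, hone⟩ := hex
          have := Finset.single_le_sum
            (fun j (_ : j ∈ Finset.Ico 1 k) => mul_nonneg (hp j) (hq (k - j))) hi
          rw [hone] at this
          exact this
        · left
          apply Finset.sum_eq_zero
          intro i hi
          rcases hterm i hi with h | h
          · exact h
          · exact absurd ⟨i, hi, h⟩ hex
      -- orthogonality relations
      have hv0 : p.coeff k * q.coeff (m - k) = 0 := hzero_m k hk1 hkm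
      have hu0 : p.coeff (n - k) * q.coeff k = 0 := by
        have := hzero_n (n - k) (by omega)
        rwa [show n - (n - k) = k by omega] at this
      -- case analysis
      rcases eq_or_lt_of_le (hp k) with hck | hck
      · rcases eq_or_lt_of_le (hq k) with hek | hek
        · -- c_k = 0, e_k = 0
          left
          have hM1 : M = 1 := by rw [← hck, ← hek] at hAk; linarith
          have h2 : p.coeff 0 * q.coeff (m - k) + p.coeff (n - k) * q.coeff 0 = 0 := by
            linarith
          have h3 : p.coeff 0 * q.coeff (m - k) = 0 ∧ p.coeff (n - k) * q.coeff 0 = 0 := by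
            constructor <;>
              nlinarith [mul_nonneg (hp 0) (hq (m - k)), mul_nonneg (hp (n - k)) (hq 0)]
          refine ⟨hck.symm, hek.symm, ?_, ?_⟩
          · rcases mul_eq_zero.mp h3.2 with h | h
            · exact h
            · exact absurd h (ne_of_gt hq0)
          · rcases mul_eq_zero.mp h3.1 with h | h
            · exact absurd h (ne_of_gt hp0)
            · exact h
        · -- c_k = 0, e_k > 0
          right; left
          have huk : p.coeff (n - k) = 0 := by
            rcases mul_eq_zero.mp hu0 with h | h
            · exact h
            · exact absurd h (ne_of_gt hek)
          rw [← hck] at hAk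
          have hpos : 0 < p.coeff 0 * q.coeff k := mul_pos hp0 hek
          have hM0 : M = 0 := by
            rcases hM01 with h | h
            · exact h
            · linarith
          rw [hM0] at hAk hBk
          have hek0 : q.coeff k = q.coeff 0 := by
            apply mul_left_cancel₀ (ne_of_gt hp0)
            rw [h00]; linarith
          have hvk : q.coeff (m - k) = q.coeff 0 := by
            apply mul_left_cancel₀ (ne_of_gt hp0)
            rw [h00]
            rw [huk, zero_mul] at hBk
            linarith
          exact ⟨hck.symm, hek0, huk, hvk⟩
      · -- c_k > 0
        right; right
        have hvk : q.coeff (m - k) = 0 := by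
          rcases mul_eq_zero.mp hv0 with h | h
          · exact absurd h (ne_of_gt hck)
          · exact h
        rw [hvk, mul_zero] at hBk
        have hukpos : 0 < p.coeff (n - k) := by
          have h2 : 0 < p.coeff (n - k) * q.coeff 0 := by
            nlinarith [mul_nonneg (hp 0) (hq k), mul_pos hck hq0]
          rcases (hp (n - k)).lt_or_eq with h | h
          · exact h
          · exfalso; rw [← h, zero_mul] at h2; linarith
        have hek : q.coeff k = 0 := by
          rcases mul_eq_zero.mp hu0 with h | h
          · exact absurd h (ne_of_gt hukpos)
          · exact h
        rw [hek, mul_zero] at hAk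
        have hckpos : 0 < p.coeff k * q.coeff 0 := mul_pos hck hq0
        have hM0 : M = 0 := by
          rcases hM01 with h | h
          · exact h
          · linarith
        rw [hM0] at hAk hBk
        have hck0 : p.coeff k = p.coeff 0 := by
          apply mul_right_cancel₀ (ne_of_gt hq0)
          rw [h00]; linarith
        have huk0 : p.coeff (n - k) = p.coeff 0 := by
          apply mul_right_cancel₀ (ne_of_gt hq0)
          rw [h00]; linarith
        exact ⟨hck0, hek, huk0, hvk⟩
  rcases key s hs1 le_rfl with ⟨h, -, -, -⟩ | ⟨h, -, -, -⟩ | ⟨-, h, -, -⟩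
  · exact absurd h (ne_of_gt hcs)
  · exact absurd h (ne_of_gt hcs)
  · exact absurd h (ne_of_gt hes)
end

section
/- No product of two real polynomials, each of the form (1/(n+1))·∑_{j=0}^{n} x^j for the same n ≥ 1, equals (1/(2n+1))·∑_{s=0}^{2n} x^s; more generally: there do not exist real polynomials p, q with nonnegative coefficients, both of degree n ≥ 1 with nonzero constant term, such that p(x)·q(x) = (1/(2n+1)) ∑_{s=0}^{2n} x^s and p(1) = q(1) = 1. -/
/-!
Write `c = 1/(2n+1)` and `p = ∑ aᵢ Xⁱ`, `q = ∑ bᵢ Xⁱ`. Comparing the coefficients of `X⁰`, `X²ⁿ`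
and `Xⁿ` in `p q` gives `a₀ b₀ = c`, `aₙ bₙ = c` and, by nonnegativity, `a₀ bₙ + aₙ b₀ ≤ c`.
But `(a₀ bₙ)(aₙ b₀) = c²`, so AM-GM forces `a₀ bₙ + aₙ b₀ ≥ 2c > c`.
-/

open Polynomial Finset

namespace Polynomial

variable {R : Type*}

theorem coeff_C_mul_sum_range_X_pow [Semiring R] (c : R) {m k : ℕ} (hk : k < m) :
    (C c * ∑ s ∈ range m, (X : R[X]) ^ s).coeff k = c := by
  simp [coeff_C_mul, finsetSum_coeff, coeff_X_pow, hk]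

theorem coeff_zero_mul_add_mul_coeff_zero_le_coeff_mul [CommSemiring R] [PartialOrder R]
    [IsOrderedRing R] {p q : R[X]} (hp : ∀ k, 0 ≤ p.coeff k) (hq : ∀ k, 0 ≤ q.coeff k)
    {n : ℕ} (hn : n ≠ 0) :
    p.coeff 0 * q.coeff n + p.coeff n * q.coeff 0 ≤ (p * q).coeff n := by
  have hsub : {(0, n), (n, 0)} ⊆ antidiagonal n := by
    simp [insert_subset_iff]
  have hne : ((0, n) : ℕ × ℕ) ∉ ({(n, 0)} : Finset (ℕ × ℕ)) := by
    simp [hn]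
  calc p.coeff 0 * q.coeff n + p.coeff n * q.coeff 0
      = ∑ x ∈ {(0, n), (n, 0)}, p.coeff x.1 * q.coeff x.2 := by
        rw [sum_insert hne, sum_singleton]
    _ ≤ ∑ x ∈ antidiagonal n, p.coeff x.1 * q.coeff x.2 :=
        sum_le_sum_of_subset_of_nonneg hsub fun x _ _ => mul_nonneg (hp x.1) (hq x.2)
    _ = (p * q).coeff n := (coeff_mul p q n).symm

end Polynomial

theorem two_mul_mul_le_mul_add_mul_of_mul_eq {R : Type*} [CommRing R] [LinearOrder R]
    [IsStrictOrderedRing R] {a b c d : R} (ha : 0 ≤ a) (hb : 0 ≤ b) (hc : 0 ≤ c) (hd : 0 ≤ d)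
    (h : a * b = c * d) : 2 * (a * b) ≤ a * d + c * b := by
  nlinarith [sq_nonneg (a * d - c * b), mul_nonneg ha hd, mul_nonneg hc hb, mul_nonneg ha hb]

theorem no_fair_pair_equal_order (n : ℕ) (hn : 1 ≤ n) :
    ¬ ∃ p q : ℝ[X],
      (∀ k, 0 ≤ p.coeff k) ∧ (∀ k, 0 ≤ q.coeff k) ∧
      p.natDegree = n ∧ q.natDegree = n ∧
      p.coeff 0 ≠ 0 ∧ q.coeff 0 ≠ 0 ∧
      p.eval 1 = 1 ∧ q.eval 1 = 1 ∧
      p * q = Polynomial.C ((1 : ℝ) / (2 * n + 1)) *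
        ∑ s ∈ Finset.range (2 * n + 1), (X : ℝ[X]) ^ s := by
  rintro ⟨p, q, hp, hq, hdp, hdq, -, -, -, -, hpq⟩
  set c : ℝ := 1 / (2 * n + 1)
  have hc : 0 < c := by positivity
  have hcoeff {k : ℕ} (hk : k < 2 * n + 1) : (p * q).coeff k = c := by
    rw [hpq, coeff_C_mul_sum_range_X_pow c hk]
  have hlow : p.coeff 0 * q.coeff 0 = c := by
    rw [← mul_coeff_zero, hcoeff (by omega)]
  have htop : p.coeff n * q.coeff n = c := by
    rw [← coeff_mul_add_eq_of_natDegree_le hdp.le hdq.le, hcoeff (by omega)]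
  have hmid := coeff_zero_mul_add_mul_coeff_zero_le_coeff_mul hp hq (n := n) (by omega)
  rw [hcoeff (by omega)] at hmid
  have hamgm := two_mul_mul_le_mul_add_mul_of_mul_eq (hp 0) (hq 0) (hp n) (hq n)
    (hlow.trans htop.symm)
  linarith
end

section
/- A real polynomial of odd degree with nonnegative coefficients and positive leading and constant coefficients cannot divide ∑_{s=0}^{t} x^s when t is odd; equivalently, if p and q are real polynomials with nonnegative coefficients, positive constant terms, both of odd degree, then p·q ≠ c·∑_{s=0}^{t} x^s for any c > 0. -/
/-!
For even `t`, `∑_{s ≤ t} x ^ s` is positive at every real `x`, whereas an odd-degree real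
polynomial has a real root, so `p` cannot divide it. For odd `t`, the degrees do not match:
`deg (p * q) = deg p + deg q` is even.
-/

open Polynomial Finset Filter

lemma Polynomial.natDegree_geom_sum_X {R : Type*} [CommRing R] [Nontrivial R] (n : ℕ) :
    (∑ i ∈ range (n + 1), (X : R[X]) ^ i).natDegree = n := by
  have h := congrArg natDegree (geom_sum_mul (X : R[X]) (n + 1))
  rw [← C_1, (monic_geom_sum_X n.succ_ne_zero).natDegree_mul (monic_X_sub_C 1),
    natDegree_X_sub_C, natDegree_X_pow_sub_C] at h
  exact Nat.add_right_cancel h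

lemma tendsto_pow_atBot_atBot_of_odd {n : ℕ} (hn : Odd n) :
    Tendsto (fun x : ℝ => x ^ n) atBot atBot := by
  have h : (fun x : ℝ => x ^ n) = fun x => -(-x) ^ n := by
    funext x
    rw [hn.neg_pow, neg_neg]
  rw [h]
  exact tendsto_neg_atTop_atBot.comp ((tendsto_pow_atTop hn.pos.ne').comp tendsto_neg_atBot_atTop)

lemma Polynomial.exists_isRoot_of_odd_natDegree_real {f : ℝ[X]} (hf : Odd f.natDegree) :
    ∃ x, f.IsRoot x := by
  wlog hlc : 0 < f.leadingCoeff generalizing f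
  · obtain ⟨x, hx⟩ := this (f := -f) (by rwa [natDegree_neg]) <| by
      have hf0 : f ≠ 0 := ne_zero_of_natDegree_gt hf.pos
      rw [leadingCoeff_neg, neg_pos]
      exact (not_lt.mp hlc).lt_of_ne (leadingCoeff_ne_zero.mpr hf0)
    exact ⟨x, by simpa using hx⟩
  have hdeg : 0 < f.degree := natDegree_pos_iff_degree_pos.mp hf.pos
  have htop : Tendsto f.eval atTop atTop := f.tendsto_atTop_of_leadingCoeff_nonneg hdeg hlc.le
  have hbot : Tendsto f.eval atBot atBot :=
    f.isEquivalent_atBot_lead.symm.tendsto_atBot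
      ((tendsto_pow_atBot_atBot_of_odd hf).const_mul_atBot hlc)
  exact (f.continuous.surjective htop hbot) 0

theorem no_two_odd_degree_factors_general (p q : ℝ[X])
    (hpodd : Odd p.natDegree) (hqodd : Odd q.natDegree) :
    ∀ (t : ℕ) (c : ℝ), 0 < c →
      p * q ≠ Polynomial.C c * ∑ s ∈ Finset.range (t + 1), (X : ℝ[X]) ^ s := by
  intro t c hc h
  rcases Nat.even_or_odd t with ht | ht
  · obtain ⟨r, hr⟩ := exists_isRoot_of_odd_natDegree_real hpodd
    have hψ : 0 < ∑ s ∈ range (t + 1), r ^ s := ht.add_one.geom_sum_pos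
    have heval := congrArg (eval r) h
    rw [eval_mul, hr.eq_zero, zero_mul, eval_mul, eval_C, eval_geom_sum] at heval
    exact (mul_pos hc hψ).ne heval
  · have hdeg := congrArg natDegree h
    rw [natDegree_mul (ne_zero_of_natDegree_gt hpodd.pos) (ne_zero_of_natDegree_gt hqodd.pos),
      natDegree_C_mul hc.ne', natDegree_geom_sum_X] at hdeg
    exact Nat.not_even_iff_odd.mpr ht (hdeg ▸ hpodd.add_odd hqodd)

theorem no_two_odd_degree_factors (p q : ℝ[X])
    (hp : ∀ k, 0 ≤ p.coeff k) (hq : ∀ k, 0 ≤ q.coeff k)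
    (hp0 : 0 < p.coeff 0) (hq0 : 0 < q.coeff 0)
    (hpodd : Odd p.natDegree) (hqodd : Odd q.natDegree) :
    ∀ (t : ℕ) (c : ℝ), 0 < c →
      p * q ≠ Polynomial.C c * ∑ s ∈ Finset.range (t + 1), (X : ℝ[X]) ^ s :=
  no_two_odd_degree_factors_general p q hpodd hqodd
end

section
/- Suppose d_1(x), ..., d_m(x) are polynomials over ℝ with coefficients in {0,1}, each with constant coefficient 1, and ∏_{i=1}^m d_i(x) = ∑_{s=0}^{t} x^s. Then for each s with 1 ≤ s ≤ t, at most one d_i has a nonzero coefficient of x^s. -/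
/-! If every factor has nonnegative coefficients and constant term `1`, the coefficient of `x^s`
(`s ≠ 0`) in the product is at least the sum of the coefficients of `x^s` in the factors: pick the
`x^s` term from one factor and the constant terms from all the others. For `∑_{k ≤ t} x^k` that
coefficient is `1`, so two dice with an `x^s` term (each coefficient `1`) are impossible. -/

open Polynomial Finset

namespace Polynomial

lemma coeff_sum_range_X_pow {R : Type*} [Semiring R] (t n : ℕ) :
    (∑ s ∈ range t, (X : R[X]) ^ s).coeff n = if n < t then 1 else 0 := by
  simp [finsetSum_coeff, coeff_X_pow]

variable {R : Type*} [CommSemiring R] [PartialOrder R] [IsOrderedRing R]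

lemma coeff_mul_nonneg {p q : R[X]} (hp : ∀ k, 0 ≤ p.coeff k) (hq : ∀ k, 0 ≤ q.coeff k)
    (n : ℕ) : 0 ≤ (p * q).coeff n := by
  rw [coeff_mul]
  exact sum_nonneg fun x _ => mul_nonneg (hp _) (hq _)

lemma coeff_prod_nonneg {ι : Type*} {s : Finset ι} {f : ι → R[X]}
    (hf : ∀ i ∈ s, ∀ k, 0 ≤ (f i).coeff k) (n : ℕ) : 0 ≤ (∏ i ∈ s, f i).coeff n :=
  prod_induction f (fun p => ∀ k, 0 ≤ p.coeff k) (fun _ _ hp hq => coeff_mul_nonneg hp hq)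
    (fun k => by rw [coeff_one]; split_ifs <;> simp) hf n

lemma coeff_mul_add_coeff_mul_le_coeff_mul {p q : R[X]} (hp : ∀ k, 0 ≤ p.coeff k)
    (hq : ∀ k, 0 ≤ q.coeff k) {n : ℕ} (hn : n ≠ 0) :
    p.coeff n * q.coeff 0 + p.coeff 0 * q.coeff n ≤ (p * q).coeff n := by
  rw [coeff_mul]
  exact add_le_sum (f := fun x : ℕ × ℕ => p.coeff x.1 * q.coeff x.2)
    (fun x _ => mul_nonneg (hp _) (hq _)) (mem_antidiagonal.2 (add_zero n))
    (mem_antidiagonal.2 (zero_add n)) (show ((n, 0) : ℕ × ℕ) ≠ (0, n) by simp [hn])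

lemma sum_coeff_le_coeff_prod {ι : Type*} (s : Finset ι) {f : ι → R[X]}
    (hf : ∀ i ∈ s, ∀ k, 0 ≤ (f i).coeff k) (h0 : ∀ i ∈ s, (f i).coeff 0 = 1) {n : ℕ}
    (hn : n ≠ 0) : ∑ i ∈ s, (f i).coeff n ≤ (∏ i ∈ s, f i).coeff n := by
  classical
  induction s using Finset.induction_on with
  | empty => simp [coeff_one, hn]
  | insert a s ha ih =>
    have hf' : ∀ i ∈ s, ∀ k, 0 ≤ (f i).coeff k := fun i hi => hf i (mem_insert_of_mem hi)
    have h0' : ∀ i ∈ s, (f i).coeff 0 = 1 := fun i hi => h0 i (mem_insert_of_mem hi)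
    have hs0 : (∏ i ∈ s, f i).coeff 0 = 1 := by
      rw [coeff_zero_prod]
      exact prod_eq_one h0'
    rw [sum_insert ha, prod_insert ha]
    set P := ∏ i ∈ s, f i
    calc (f a).coeff n + ∑ i ∈ s, (f i).coeff n
        ≤ (f a).coeff n * P.coeff 0 + (f a).coeff 0 * P.coeff n := by
          rw [hs0, h0 a (mem_insert_self a s), mul_one, one_mul]
          gcongr
          exact ih hf' h0'
      _ ≤ (f a * P).coeff n :=
          coeff_mul_add_coeff_mul_le_coeff_mul (hf a (mem_insert_self a s))
            (coeff_prod_nonneg hf') hn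

end Polynomial

theorem uniqueness_of_terms (m t : ℕ) (d : Fin m → ℝ[X])
    (hcoeff : ∀ i k, (d i).coeff k = 0 ∨ (d i).coeff k = 1)
    (h0 : ∀ i, (d i).coeff 0 = 1)
    (hprod : ∏ i, d i = ∑ s ∈ Finset.range (t + 1), (X : ℝ[X]) ^ s) :
    ∀ s, 1 ≤ s → s ≤ t → ∀ i j, (d i).coeff s ≠ 0 → (d j).coeff s ≠ 0 → i = j := by
  intro s hs1 hs2 i j hi hj
  by_contra hne
  have hnn : ∀ i k, 0 ≤ (d i).coeff k := fun i k => by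
    rcases hcoeff i k with h | h <;> simp [h]
  have hsum : ∑ k, (d k).coeff s ≤ 1 := by
    have := sum_coeff_le_coeff_prod univ (fun k _ => hnn k) (fun k _ => h0 k)
      (show s ≠ 0 by omega)
    rwa [hprod, coeff_sum_range_X_pow, if_pos (by omega)] at this
  have hpair := add_le_sum (fun k _ => hnn k s) (mem_univ i) (mem_univ j) hne
  rw [(hcoeff i s).resolve_left hi, (hcoeff j s).resolve_left hj] at hpair
  linarith
end

section
/- Suppose d_1, ..., d_m are polynomials with coefficients in {0,1}, constant coefficients 1, and ∏ d_i = ∑_{s=0}^t x^s. If for indices γ ≠ γ' and naturals s ≠ s', u we have coeff_{d_γ}(s) = coeff_{d_γ}(s') = 1 and coeff_{d_{γ'}}(s'+u) = 1 with u ≥ 1, then for every index δ ≠ γ, coeff_{d_δ}(s+u) = 0. -/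
/-!
The coefficients of the `d i` are nonnegative, so the coefficient of `X ^ (s + s' + u)` in
`∏ i, d i` is at least the sum of the contributions of two distinct decompositions of the
degree: `s + (s' + u)` from `d γ` and `d γ'`, and `s' + (s + u)` from `d γ` and `d δ`.
Each contributes `1`, but every coefficient of `∑ X ^ i` is at most `1`.
-/

open Polynomial Finset

namespace Polynomial

variable {ι R : Type*}

theorem coeff_prod_eq_sum_finsuppAntidiag [CommSemiring R] [DecidableEq ι] (s : Finset ι)
    (f : ι → R[X]) (n : ℕ) :
    (∏ i ∈ s, f i).coeff n = ∑ l ∈ s.finsuppAntidiag n, ∏ i ∈ s, (f i).coeff (l i) := by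
  simpa [← coeff_coe, ← coeToPowerSeries.ringHom_apply, map_prod] using
    PowerSeries.coeff_prod (fun i => (f i : PowerSeries R)) n s

theorem prod_coeff_add_prod_coeff_le_coeff_prod [CommSemiring R] [PartialOrder R]
    [IsOrderedRing R] [DecidableEq ι] {s : Finset ι} {f : ι → R[X]}
    (hf : ∀ i ∈ s, ∀ k, 0 ≤ (f i).coeff k) {n : ℕ} {l₁ l₂ : ι →₀ ℕ} (hl : l₁ ≠ l₂)
    (h₁ : l₁ ∈ s.finsuppAntidiag n) (h₂ : l₂ ∈ s.finsuppAntidiag n) :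
    ∏ i ∈ s, (f i).coeff (l₁ i) + ∏ i ∈ s, (f i).coeff (l₂ i) ≤ (∏ i ∈ s, f i).coeff n := by
  rw [coeff_prod_eq_sum_finsuppAntidiag,
    ← sum_pair (f := fun l => ∏ i ∈ s, (f i).coeff (l i)) hl]
  exact sum_le_sum_of_subset_of_nonneg (insert_subset h₁ (singleton_subset_iff.2 h₂))
    fun l _ _ => prod_nonneg fun i hi => hf i hi _

theorem coeff_sum_X_pow [Semiring R] (s : Finset ℕ) (n : ℕ) :
    (∑ i ∈ s, (X : R[X]) ^ i).coeff n = if n ∈ s then 1 else 0 := by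
  simp [coeff_X_pow]

end Polynomial

namespace Finsupp

variable {ι : Type*}

theorem single_add_single_mem_finsuppAntidiag [DecidableEq ι] [Fintype ι] (i j : ι) (a b : ℕ) :
    single i a + single j b ∈ (univ : Finset ι).finsuppAntidiag (a + b) := by
  simp [mem_finsuppAntidiag, sum_add_distrib, single_apply]

theorem prod_apply_single_add_single [Fintype ι] {M : Type*} [CommMonoid M] {g : ι → ℕ → M}
    (hg : ∀ k, g k 0 = 1) {i j : ι} (hij : i ≠ j) (a b : ℕ) :
    ∏ k, g k ((single i a + single j b) k) = g i a * g j b := by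
  rw [prod_eq_mul i j hij] <;> simp_all [hij.symm]

end Finsupp

theorem otherzero_general (m t : ℕ) (d : Fin m → ℝ[X])
    (hcoeff : ∀ i k, (d i).coeff k = 0 ∨ (d i).coeff k = 1)
    (h0 : ∀ i, (d i).coeff 0 = 1)
    (hprod : ∏ i, d i = ∑ s ∈ Finset.range (t + 1), (X : ℝ[X]) ^ s)
    (γ γ' : Fin m) (hγ : γ ≠ γ') (s s' u : ℕ) (hss' : s ≠ s')
    (h1 : (d γ).coeff s = 1) (h2 : (d γ).coeff s' = 1)
    (h3 : (d γ').coeff (s' + u) = 1) :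
    ∀ δ, δ ≠ γ → (d δ).coeff (s + u) = 0 := by
  intro δ hδ
  by_contra hne
  have h4 : (d δ).coeff (s + u) = 1 := (hcoeff δ (s + u)).resolve_left hne
  have hnonneg : ∀ i ∈ univ, ∀ k, 0 ≤ (d i).coeff k := fun i _ k => by
    rcases hcoeff i k with h | h <;> simp [h]
  have hdistinct : Finsupp.single γ s + Finsupp.single γ' (s' + u) ≠
      Finsupp.single γ s' + Finsupp.single δ (s + u) := fun h => hss' <| by
    simpa [Finsupp.single_apply, hγ.symm, hδ.symm] using DFunLike.congr_fun h γ
  have hsum := prod_coeff_add_prod_coeff_le_coeff_prod hnonneg hdistinct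
    (Finsupp.single_add_single_mem_finsuppAntidiag γ γ' s (s' + u))
    (add_left_comm s' s u ▸ Finsupp.single_add_single_mem_finsuppAntidiag γ δ s' (s + u))
  rw [Finsupp.prod_apply_single_add_single h0 hγ, Finsupp.prod_apply_single_add_single h0 hδ.symm,
    h1, h2, h3, h4, hprod, coeff_sum_X_pow] at hsum
  split_ifs at hsum <;> norm_num at hsum

theorem otherzero (m t : ℕ) (d : Fin m → ℝ[X])
    (hcoeff : ∀ i k, (d i).coeff k = 0 ∨ (d i).coeff k = 1)
    (h0 : ∀ i, (d i).coeff 0 = 1)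
    (hprod : ∏ i, d i = ∑ s ∈ Finset.range (t + 1), (X : ℝ[X]) ^ s)
    (γ γ' : Fin m) (hγ : γ ≠ γ') (s s' u : ℕ) (hss' : s ≠ s') (hu : 1 ≤ u)
    (h1 : (d γ).coeff s = 1) (h2 : (d γ).coeff s' = 1)
    (h3 : (d γ').coeff (s' + u) = 1) :
    ∀ δ, δ ≠ γ → (d δ).coeff (s + u) = 0 :=
  otherzero_general m t d hcoeff h0 hprod γ γ' hγ s s' u hss' h1 h2 h3
end

section
/- The polynomial 1 + x^2 + x^3 + x^5 cannot appear as a factor in any factorization ∏_{i=1}^m d_i(x) = ∑_{s=0}^{t} x^s where each d_i has coefficients in {0,1} and constant coefficient 1. -/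
open Polynomial Finset

/-! Write `∏ dᵢ = (1 + X² + X³ + X⁵) · r`, where `r` is the product of the other factors and so
has nonnegative coefficients. Then `c₃ = r₃ + r₁ + r₀ ≥ c₁ + c₀` for the coefficients `cₖ` of the
product, since `X³` arises both from `X³ · r₀` and from `X² · r₁ X`. For `1 + X + ⋯ + Xᵗ`, however,
`c₀ = 1` and `c₃ ≤ c₁`. -/

theorem Polynomial.coeff_sum_range_X_pow_s14 {S : Type*} [Semiring S] (t k : ℕ) :
    (∑ s ∈ range (t + 1), (X : S[X]) ^ s).coeff k = if k ≤ t then 1 else 0 := by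
  simp only [finsetSum_coeff, coeff_X_pow, sum_ite_eq, mem_range, Nat.lt_succ_iff]

section

variable {R : Type*} [CommSemiring R] [PartialOrder R] [IsOrderedRing R]

theorem Polynomial.coeff_prod_nonneg_s14 {ι : Type*} (s : Finset ι) (f : ι → R[X])
    (hf : ∀ i ∈ s, ∀ k, 0 ≤ (f i).coeff k) (k : ℕ) : 0 ≤ (∏ i ∈ s, f i).coeff k := by
  induction s using Finset.cons_induction generalizing k with
  | empty => rw [prod_empty, coeff_one]; split_ifs <;> simp
  | cons a s ha ih =>
    rw [prod_cons, coeff_mul]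
    exact sum_nonneg fun x _ =>
      mul_nonneg (hf a (mem_cons_self a s) _) (ih (fun i hi => hf i (mem_cons_of_mem hi)) _)

theorem d2_mul_coeff_one_add_coeff_zero_le_coeff_three (p : R[X])
    (hp : ∀ k, 0 ≤ p.coeff k) :
    ((1 + X ^ 2 + X ^ 3 + X ^ 5) * p).coeff 1 + ((1 + X ^ 2 + X ^ 3 + X ^ 5) * p).coeff 0 ≤
      ((1 + X ^ 2 + X ^ 3 + X ^ 5) * p).coeff 3 := by
  norm_num [add_mul, coeff_X_pow_mul', add_assoc]
  exact le_add_of_nonneg_left (hp 3)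

end

theorem d2_not_in_fair_sack_general (m t : ℕ) (d : Fin m → ℝ[X])
    (hcoeff : ∀ i k, (d i).coeff k = 0 ∨ (d i).coeff k = 1)
    (hprod : ∏ i, d i = ∑ s ∈ Finset.range (t + 1), (X : ℝ[X]) ^ s) :
    ∀ i, d i ≠ 1 + X ^ 2 + X ^ 3 + X ^ 5 := by
  intro i hi
  have hrest : ∀ k, 0 ≤ (∏ j ∈ univ.erase i, d j).coeff k :=
    coeff_prod_nonneg_s14 _ _ fun j _ k => (hcoeff j k).elim (·.ge) (· ▸ zero_le_one)
  have hle := d2_mul_coeff_one_add_coeff_zero_le_coeff_three _ hrest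
  rw [← hi, mul_prod_erase _ _ (mem_univ i), hprod] at hle
  simp only [coeff_sum_range_X_pow_s14] at hle
  split_ifs at hle <;> first | omega | norm_num at hle

theorem d2_not_in_fair_sack (m t : ℕ) (d : Fin m → ℝ[X])
    (hcoeff : ∀ i k, (d i).coeff k = 0 ∨ (d i).coeff k = 1)
    (h0 : ∀ i, (d i).coeff 0 = 1)
    (hprod : ∏ i, d i = ∑ s ∈ Finset.range (t + 1), (X : ℝ[X]) ^ s) :
    ∀ i, d i ≠ 1 + X ^ 2 + X ^ 3 + X ^ 5 :=
  d2_not_in_fair_sack_general m t d hcoeff hprod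
end
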